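/- arXiv:1405.6672 — 2 statements merged into one kernel-verified Lean document; each statement's English description precedes it below -/
import Mathlib

section
/- If P satisfies a margin condition with radius r_0, then for every optimal codebook c* ∈ M and every c ∈ B(0,M)^k with ‖c − c*‖ ≤ B r_0 / (4√2 M), one has ℓ(c,c*) ≥ (p_min/2) ‖c − c*‖², where ‖c − c*‖² = Σ_{i=1}^k ‖c_i − c_i*‖². -/
open MeasureTheory Metric

noncomputable section

variable {H : Type*} [NormedAddCommGroup H] [InnerProductSpace ℝ H] [MeasurableSpace H]

/-- `qgamma k c x = min_j ‖x - c j‖²`. -/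
def qgamma (k : ℕ) (c : Fin k → H) (x : H) : ℝ := ⨅ j : Fin k, ‖x - c j‖ ^ 2

/-- distortion (risk) of a codebook. -/
def qrisk (k : ℕ) (P : Measure H) (c : Fin k → H) : ℝ := ∫ x, qgamma k c x ∂P

/-- the set of optimal codebooks. -/
def qopt (k : ℕ) (P : Measure H) : Set (Fin k → H) :=
  {c | ∀ c' : Fin k → H, qrisk k P c ≤ qrisk k P c'}

/-- the `i`-th (closed) Voronoi cell of the codebook `c`. -/
def vcell (k : ℕ) (c : Fin k → H) (i : Fin k) : Set H :=
  {x | ∀ j : Fin k, ‖x - c i‖ ≤ ‖x - c j‖}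

/-- `B`, the minimal separation between code points of optimal codebooks. -/
def qB (k : ℕ) (P : Measure H) : ℝ :=
  sInf {b | ∃ c ∈ qopt k P, ∃ i j : Fin k, i ≠ j ∧ b = ‖c i - c j‖}

/-- `p_min`, the minimal mass of a Voronoi cell of an optimal codebook. -/
def qpmin (k : ℕ) (P : Measure H) : ℝ :=
  sInf {p | ∃ c ∈ qopt k P, ∃ i : Fin k, p = (P (vcell k c i)).toReal}

/-- `N_{c*}`, the union of the boundaries between Voronoi cells. -/
def nbd (k : ℕ) (c : Fin k → H) : Set H :=
  ⋃ (i : Fin k) (j : Fin k) (_ : i ≠ j), vcell k c i ∩ vcell k c j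

/-- the weight function `p(t)`, the maximal mass of the closed `t`-neighborhood
of `N_{c*}` over optimal codebooks `c*`. -/
def pweight (k : ℕ) (P : Measure H) (t : ℝ) : ℝ :=
  sSup {p | ∃ c ∈ qopt k P, p = (P (cthickening t (nbd k c))).toReal}

/-- `P` is `M`-bounded: its support is contained in the closed ball `B(0,M)`. -/
def mbounded (P : Measure H) (M : ℝ) : Prop := P (closedBall (0 : H) M)ᶜ = 0

/-- the support of `P` contains more than `k` points. -/
def suppGT (P : Measure H) (k : ℕ) : Prop :=
  ∀ S : Finset H, S.card ≤ k → P ((S : Set H)ᶜ) ≠ 0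

/-- the margin condition with radius `r0`. -/
def margin (k : ℕ) (P : Measure H) (M r0 : ℝ) : Prop :=
  0 < r0 ∧ mbounded P M ∧
    ∀ t : ℝ, 0 ≤ t → t ≤ r0 → pweight k P t ≤ qB k P * qpmin k P * t / (128 * M ^ 2)


/-!
Split `H` into the Voronoi cells `Wᵢ` of the optimal codebook `cs`, made disjoint with
`disjointed`. Moving one code point of `cs` cannot lower the risk, which forces `cs i` to be the
`P`-mean of `Wᵢ`. Hence `∫_{Wᵢ} ‖x - c i‖² - ‖x - cs i‖² = P(Wᵢ) ‖c i - cs i‖²` and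
`‖cs i‖ ≤ M`; the margin condition at `t = 0` makes the boundary set `N_cs` null, so
`P(Wᵢ) ≥ p_min`.

The risk of `c` falls below `∑ᵢ ∫_{Wᵢ} ‖x - c i‖²` only at points of `Wᵢ` that `c` sends to
some `c j` with `j ≠ i`. There the loss is at most `K = 4√2 M ‖c - cs‖`, and moving the point by
at most `K / 2B` in the direction `cs j - cs i` makes it as close to `cs j` as to `cs i`, so the
segment in between meets `N_cs`. By the margin condition the `K / 2B`-neighbourhood of `N_cs`
has mass at most `p_min K / (256 M²)`, so the total loss is at most `p_min ‖c - cs‖² / 8`.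
-/

theorem sq_norm_sub_sub_sq_norm_sub_le {E : Type*} [NormedAddCommGroup E] {x a b : E} {M : ℝ}
    (hx : ‖x‖ ≤ M) (ha : ‖a‖ ≤ M) (hb : ‖b‖ ≤ M) :
    ‖x - a‖ ^ 2 - ‖x - b‖ ^ 2 ≤ 4 * M * ‖a - b‖ := by
  have hdiff : ‖x - a‖ - ‖x - b‖ ≤ ‖a - b‖ := by
    simpa [norm_sub_rev b a] using norm_sub_norm_le (x - a) (x - b)
  have hsum : ‖x - a‖ + ‖x - b‖ ≤ 4 * M := by
    linarith [norm_sub_le x a, norm_sub_le x b]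
  calc ‖x - a‖ ^ 2 - ‖x - b‖ ^ 2 = (‖x - a‖ - ‖x - b‖) * (‖x - a‖ + ‖x - b‖) := by ring
    _ ≤ ‖a - b‖ * (‖x - a‖ + ‖x - b‖) := by gcongr
    _ ≤ ‖a - b‖ * (4 * M) := by gcongr
    _ = 4 * M * ‖a - b‖ := by ring

theorem add_le_sqrt_two_mul_sqrt_sum_sq {ι : Type*} [Fintype ι] (f : ι → ℝ) {i j : ι}
    (hij : i ≠ j) : f i + f j ≤ √2 * √(∑ l, f l ^ 2) := by
  classical
  have hpair : f i ^ 2 + f j ^ 2 ≤ ∑ l, f l ^ 2 :=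
    calc f i ^ 2 + f j ^ 2 = ∑ l ∈ {i, j}, f l ^ 2 :=
          (Finset.sum_pair (f := fun l => f l ^ 2) hij).symm
      _ ≤ ∑ l, f l ^ 2 :=
        Finset.sum_le_sum_of_subset_of_nonneg (Finset.subset_univ _) fun l _ _ => sq_nonneg _
  rw [← Real.sqrt_mul zero_le_two]
  refine (le_abs_self _).trans (Real.abs_le_sqrt ?_)
  nlinarith [sq_nonneg (f i - f j)]

section Voronoi

variable {E : Type*} [NormedAddCommGroup E] {k : ℕ}

theorem isClosed_vcell (c : Fin k → E) (i : Fin k) : IsClosed (vcell k c i) := by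
  simp only [vcell, Set.ofPred_forall]
  exact isClosed_iInter fun j => isClosed_le (by fun_prop) (by fun_prop)

theorem exists_mem_vcell [NeZero k] (c : Fin k → E) (x : E) : ∃ i, x ∈ vcell k c i := by
  obtain ⟨i, -, hi⟩ := Finset.univ.exists_min_image (fun j => ‖x - c j‖) Finset.univ_nonempty
  exact ⟨i, fun j => hi j (Finset.mem_univ j)⟩

theorem mem_nbd_of_mem_vcell {c : Fin k → E} {i j : Fin k} {x : E} (hij : i ≠ j)
    (hi : x ∈ vcell k c i) (hj : x ∈ vcell k c j) : x ∈ nbd k c :=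
  Set.mem_iUnion₂.2 ⟨i, j, Set.mem_iUnion.2 ⟨hij, hi, hj⟩⟩

theorem qgamma_le (c : Fin k → E) (x : E) (j : Fin k) : qgamma k c x ≤ ‖x - c j‖ ^ 2 :=
  ciInf_le (Finite.bddBelow_range _) j

theorem qgamma_nonneg (c : Fin k → E) (x : E) : 0 ≤ qgamma k c x :=
  Real.iInf_nonneg fun _ => by positivity

theorem qgamma_eq_of_mem_vcell {c : Fin k → E} {i : Fin k} {x : E} (hx : x ∈ vcell k c i) :
    qgamma k c x = ‖x - c i‖ ^ 2 :=
  have : Nonempty (Fin k) := ⟨i⟩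
  (qgamma_le c x i).antisymm (le_ciInf fun j => pow_le_pow_left₀ (norm_nonneg _) (hx j) 2)

theorem qgamma_update_le_of_mem_vcell {c : Fin k → E} {i j : Fin k} (hji : j ≠ i) (a : E)
    {x : E} (hx : x ∈ vcell k c j) : qgamma k (Function.update c i a) x ≤ qgamma k c x := by
  simpa [qgamma_eq_of_mem_vcell hx, Function.update_of_ne hji] using
    qgamma_le (Function.update c i a) x j

theorem exists_ne_mem_vcell_of_norm_le {c : Fin k → E} {i j : Fin k} (hji : j ≠ i) {z : E}
    (hz : ‖z - c j‖ ≤ ‖z - c i‖) : ∃ l ≠ i, z ∈ vcell k c l := by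
  have : NeZero k := NeZero.of_pos i.pos
  obtain ⟨l, hl⟩ := exists_mem_vcell c z
  by_cases hli : l = i
  · subst hli
    exact ⟨j, hji, fun m => hz.trans (hl m)⟩
  · exact ⟨l, hli, hl⟩

theorem iUnion_disjointed_vcell [NeZero k] (c : Fin k → E) :
    ⋃ i, disjointed (vcell k c) i = Set.univ := by
  rw [iUnion_disjointed]
  exact Set.eq_univ_of_forall fun x => Set.mem_iUnion.2 (exists_mem_vcell c x)

theorem diff_disjointed_vcell_subset_nbd (c : Fin k → E) (i : Fin k) :
    vcell k c i \ disjointed (vcell k c) i ⊆ nbd k c := by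
  rintro x ⟨hxi, hx⟩
  simp only [disjointed_eq_inter_compl, Set.mem_inter_iff, Set.mem_iInter, Set.mem_compl_iff,
    not_and, not_forall, not_not] at hx
  obtain ⟨j, hji, hxj⟩ := hx hxi
  exact mem_nbd_of_mem_vcell hji.ne' hxi hxj

theorem exists_mem_segment_mem_nbd [NormedSpace ℝ E] {c : Fin k → E} {i : Fin k} {x z : E}
    (hx : x ∈ vcell k c i) (hz : ∃ l ≠ i, z ∈ vcell k c l) :
    ∃ y ∈ segment ℝ x z, y ∈ nbd k c := by
  have : NeZero k := NeZero.of_pos i.pos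
  set others := ⋃ l ∈ ({i}ᶜ : Set (Fin k)), vcell k c l
  have hcover : segment ℝ x z ⊆ vcell k c i ∪ others := fun y _ => by
    obtain ⟨l, hl⟩ := exists_mem_vcell c y
    by_cases hli : l = i
    · exact Or.inl (hli ▸ hl)
    · exact Or.inr (Set.mem_biUnion hli hl)
  obtain ⟨l, hli, hzl⟩ := hz
  obtain ⟨y, hy, hyi, hyo⟩ := isPreconnected_closed_iff.1 (convex_segment x z).isPreconnected
    _ _ (isClosed_vcell c i) ((Set.toFinite _).isClosed_biUnion fun l _ => isClosed_vcell c l)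
    hcover ⟨x, left_mem_segment ℝ x z, hx⟩ ⟨z, right_mem_segment ℝ x z, Set.mem_biUnion hli hzl⟩
  obtain ⟨m, hmi, hym⟩ := Set.mem_iUnion₂.1 hyo
  exact ⟨y, hy, mem_nbd_of_mem_vcell (Ne.symm hmi) hyi hym⟩

/-- The witness: `z = x + s • (c j - c i)` is as close to `c j` as to `c i`, so the segment from
`x` to `z` meets `nbd k c`, and `‖z - x‖` is the radius below. -/
theorem mem_cthickening_nbd_of_mem_vcell [InnerProductSpace ℝ E] {c : Fin k → E} {i j : Fin k}
    (hji : j ≠ i) (hc : c i ≠ c j) {x : E} (hx : x ∈ vcell k c i) :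
    x ∈ cthickening ((‖x - c j‖ ^ 2 - ‖x - c i‖ ^ 2) / (2 * ‖c i - c j‖)) (nbd k c) := by
  set u := c j - c i
  set a := x - c i
  have hsq : ∀ t : ℝ, ‖a + t • u‖ ^ 2 = ‖a‖ ^ 2 + 2 * t * inner ℝ a u + t ^ 2 * ‖u‖ ^ 2 :=
    fun t => by
      rw [norm_add_sq_real, inner_smul_right, norm_smul, mul_pow, Real.norm_eq_abs, sq_abs]
      ring
  have hxj : x - c j = a + (-1 : ℝ) • u := by simp only [a, u]; module
  set D := ‖x - c j‖ ^ 2 - ‖a‖ ^ 2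
  have hu : 0 < ‖u‖ := norm_pos_iff.2 (sub_ne_zero.2 hc.symm)
  have hD : 0 ≤ D := sub_nonneg.2 (pow_le_pow_left₀ (norm_nonneg _) (hx j) 2)
  set s := D / (2 * ‖u‖ ^ 2)
  have hz : ‖x + s • u - c j‖ ≤ ‖x + s • u - c i‖ := by
    refine (pow_le_pow_iff_left₀ (norm_nonneg _) (norm_nonneg _) two_ne_zero).1 (le_of_eq ?_)
    have hs : s * (2 * ‖u‖ ^ 2) = D := div_mul_cancel₀ D (by positivity)
    rw [show x + s • u - c j = a + (s - 1) • u by simp only [a, u]; module,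
      show x + s • u - c i = a + s • u by simp only [a]; module, hsq, hsq]
    have hDu : D = ‖a + (-1 : ℝ) • u‖ ^ 2 - ‖a‖ ^ 2 := by rw [← hxj]
    rw [hsq] at hDu
    linear_combination -hs - hDu
  obtain ⟨y, hy, hyN⟩ := exists_mem_segment_mem_nbd hx (exists_ne_mem_vcell_of_norm_le hji hz)
  refine mem_cthickening_of_dist_le x y _ _ hyN ?_
  calc dist x y ≤ dist x (x + s • u) := by
        linarith [dist_add_dist_of_mem_segment hy, dist_nonneg (x := y) (y := x + s • u)]
    _ = D / (2 * ‖c i - c j‖) := by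
        rw [dist_self_add_right, norm_smul, Real.norm_of_nonneg (by positivity),
          norm_sub_rev (c i)]
        change D / (2 * ‖u‖ ^ 2) * ‖u‖ = D / (2 * ‖u‖)
        field_simp

end Voronoi

section LossBound

variable {E : Type*} [NormedAddCommGroup E] [InnerProductSpace ℝ E] {k : ℕ}

theorem sq_norm_sub_sub_qgamma_le_indicator {c cs : Fin k → E} {B K M : ℝ} (hB : 0 < B)
    (hsep : ∀ i j, i ≠ j → B ≤ ‖cs i - cs j‖) (hc : ∀ i, ‖c i‖ ≤ M) (hcs : ∀ i, ‖cs i‖ ≤ M)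
    (hK0 : 0 ≤ K) (hK : ∀ i j, i ≠ j → 4 * M * (‖c i - cs i‖ + ‖c j - cs j‖) ≤ K)
    {i : Fin k} {x : E} (hx : x ∈ vcell k cs i) (hxM : ‖x‖ ≤ M) :
    ‖x - c i‖ ^ 2 - qgamma k c x
      ≤ (cthickening (K / (2 * B)) (nbd k cs)).indicator (fun _ => K) x := by
  have : NeZero k := NeZero.of_pos i.pos
  obtain ⟨j, hj⟩ := exists_mem_vcell c x
  rw [qgamma_eq_of_mem_vcell hj]
  by_cases hji : j = i
  · rw [hji, sub_self]
    exact Set.indicator_nonneg (fun _ _ => hK0) x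
  have hci := sq_norm_sub_sub_sq_norm_sub_le hxM (hc i) (hcs i)
  have hcj := sq_norm_sub_sub_sq_norm_sub_le hxM (hcs j) (hc j)
  rw [norm_sub_rev (cs j)] at hcj
  have hcs_cell := pow_le_pow_left₀ (norm_nonneg _) (hx j) 2
  have hc_cell := pow_le_pow_left₀ (norm_nonneg _) (hj i) 2
  have hKij := hK i j (Ne.symm hji)
  have hsepij := hsep i j (Ne.symm hji)
  have hcsij : cs i ≠ cs j := fun h => by
    rw [h, sub_self, norm_zero] at hsepij
    linarith
  have hxT : x ∈ cthickening (K / (2 * B)) (nbd k cs) :=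
    cthickening_mono (div_le_div₀ hK0 (by linarith) (by positivity) (by linarith)) _
      (mem_cthickening_nbd_of_mem_vcell hji hcsij hx)
  rw [Set.indicator_of_mem hxT]
  linarith

end LossBound

section BoundedMeasure

variable {E : Type*} [NormedAddCommGroup E] [MeasurableSpace E] {P : Measure E} {M : ℝ} {k : ℕ}

theorem ae_norm_le_of_mbounded (hP : mbounded P M) : ∀ᵐ x ∂P, ‖x‖ ≤ M :=
  measure_mono_null (fun x hx => by simpa using hx) hP

theorem integrable_of_mbounded [IsFiniteMeasure P] (hP : mbounded P M) {F : Type*}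
    [NormedAddCommGroup F] {f : E → F} (hf : AEStronglyMeasurable f P) {C : ℝ}
    (hC : ∀ x, ‖x‖ ≤ M → ‖f x‖ ≤ C) : Integrable f P :=
  (integrable_const C).mono' hf ((ae_norm_le_of_mbounded hP).mono hC)

variable [OpensMeasurableSpace E]

theorem measurableSet_disjointed_vcell (c : Fin k → E) (i : Fin k) :
    MeasurableSet (disjointed (vcell k c) i) := by
  rw [disjointed_eq_inter_compl]
  exact (isClosed_vcell c i).measurableSet.inter
    (.iInter fun j => .iInter fun _ => (isClosed_vcell c j).measurableSet.compl)

theorem integral_eq_sum_setIntegral_disjointed_vcell [NeZero k] {F : Type*} [NormedAddCommGroup F]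
    [NormedSpace ℝ F] (c : Fin k → E) {f : E → F} (hf : Integrable f P) :
    ∫ x, f x ∂P = ∑ i, ∫ x in disjointed (vcell k c) i, f x ∂P := by
  rw [← integral_iUnion_fintype (measurableSet_disjointed_vcell c) (disjoint_disjointed _)
    fun _ => hf.integrableOn, iUnion_disjointed_vcell, setIntegral_univ]

variable [IsFiniteMeasure P]

theorem integrable_sq_norm_sub (hP : mbounded P M) (b : E) :
    Integrable (fun x => ‖x - b‖ ^ 2) P :=
  integrable_of_mbounded hP (by fun_prop : Continuous fun x : E => ‖x - b‖ ^ 2).aestronglyMeasurable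
    (C := (M + ‖b‖) ^ 2) fun x hx => by
    rw [Real.norm_of_nonneg (by positivity)]
    exact pow_le_pow_left₀ (norm_nonneg _) ((norm_sub_le _ _).trans (by linarith)) 2

theorem integrable_qgamma [NeZero k] (hP : mbounded P M) (c : Fin k → E) :
    Integrable (qgamma k c) P :=
  (integrable_sq_norm_sub hP (c 0)).mono
    (Measurable.iInf fun j =>
      (by fun_prop : Continuous fun x : E => ‖x - c j‖ ^ 2).measurable).aestronglyMeasurable
    (ae_of_all _ fun x => by
      rw [Real.norm_of_nonneg (qgamma_nonneg c x), Real.norm_of_nonneg (by positivity)]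
      exact qgamma_le c x 0)

theorem qrisk_update_le [NeZero k] (hP : mbounded P M) (cs : Fin k → E) (i : Fin k) (a : E) :
    qrisk k P (Function.update cs i a)
      ≤ qrisk k P cs + ∫ x in disjointed (vcell k cs) i, (‖x - a‖ ^ 2 - ‖x - cs i‖ ^ 2) ∂P := by
  set W := disjointed (vcell k cs) i
  have hW := measurableSet_disjointed_vcell cs i
  have hg : Integrable (W.indicator fun x => ‖x - a‖ ^ 2 - ‖x - cs i‖ ^ 2) P :=
    ((integrable_sq_norm_sub hP a).sub (integrable_sq_norm_sub hP (cs i))).indicator hW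
  rw [← integral_indicator hW, qrisk, qrisk, ← integral_add (integrable_qgamma hP cs) hg]
  refine integral_mono (integrable_qgamma hP _) ((integrable_qgamma hP cs).add hg) fun x => ?_
  by_cases hx : x ∈ W
  · rw [Set.indicator_of_mem hx, qgamma_eq_of_mem_vcell (disjointed_subset _ _ hx)]
    simpa using qgamma_le (Function.update cs i a) x i
  · obtain ⟨j, hj⟩ := Set.mem_iUnion.1 ((iUnion_disjointed_vcell cs).symm ▸ Set.mem_univ x)
    have hji : j ≠ i := by
      rintro rfl
      exact hx hj
    rw [Set.indicator_of_notMem hx, add_zero]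
    exact qgamma_update_le_of_mem_vcell hji a (disjointed_subset _ _ hj)

end BoundedMeasure

section Optimality

variable [OpensMeasurableSpace H] {P : Measure H} [IsFiniteMeasure P] {M : ℝ} {k : ℕ}
  {cs : Fin k → H}

theorem integrable_inner_sub (hP : mbounded P M) (v b : H) :
    Integrable (fun x => inner ℝ v (x - b)) P :=
  integrable_of_mbounded hP
    (by fun_prop : Continuous fun x : H => inner ℝ v (x - b)).aestronglyMeasurable
    (C := ‖v‖ * (M + ‖b‖)) fun x hx =>
    (norm_inner_le_norm _ _).trans
      (mul_le_mul_of_nonneg_left ((norm_sub_le _ _).trans (by linarith)) (norm_nonneg _))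

theorem setIntegral_sq_norm_sub_sub_sq_norm_sub (hP : mbounded P M) (s : Set H) (a b : H) :
    ∫ x in s, (‖x - a‖ ^ 2 - ‖x - b‖ ^ 2) ∂P
      = P.real s * ‖a - b‖ ^ 2 - 2 * ∫ x in s, inner ℝ (a - b) (x - b) ∂P := by
  have hpt : ∀ x, ‖x - a‖ ^ 2 - ‖x - b‖ ^ 2 = ‖a - b‖ ^ 2 - 2 * inner ℝ (a - b) (x - b) :=
    fun x => by
      rw [show x - a = (x - b) - (a - b) by abel, norm_sub_sq_real, real_inner_comm]
      ring
  simp_rw [hpt]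
  rw [integral_sub (integrable_const _) ((integrable_inner_sub hP _ _).integrableOn.const_mul 2),
    setIntegral_const, integral_const_mul, smul_eq_mul]

/-- Each optimal code point is the `P`-mean of its cell, stated through inner products so that
no `H`-valued integral is needed. -/
theorem setIntegral_inner_sub_eq_zero_of_mem_qopt [NeZero k] (hP : mbounded P M)
    (hcs : cs ∈ qopt k P) (i : Fin k) (v : H) :
    ∫ x in disjointed (vcell k cs) i, inner ℝ v (x - cs i) ∂P = 0 := by
  set W := disjointed (vcell k cs) i
  set L := ∫ x in W, inner ℝ v (x - cs i) ∂P
  have hquad : ∀ t : ℝ, 0 ≤ (P.real W * ‖v‖ ^ 2) * (t * t) + (-2 * L) * t + 0 := fun t => by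
    have h := (hcs _).trans (qrisk_update_le hP cs i (cs i + t • v))
    simp_rw [setIntegral_sq_norm_sub_sub_sq_norm_sub hP, add_sub_cancel_left, real_inner_smul_left,
      integral_const_mul, norm_smul, Real.norm_eq_abs, mul_pow, sq_abs] at h
    linarith
  have := discrim_le_zero hquad
  rw [discrim] at this
  nlinarith [sq_nonneg L]

theorem setIntegral_sq_norm_sub_sub_eq_of_mem_qopt [NeZero k] (hP : mbounded P M)
    (hcs : cs ∈ qopt k P) (i : Fin k) (a : H) :
    ∫ x in disjointed (vcell k cs) i, (‖x - a‖ ^ 2 - ‖x - cs i‖ ^ 2) ∂P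
      = P.real (disjointed (vcell k cs) i) * ‖a - cs i‖ ^ 2 := by
  rw [setIntegral_sq_norm_sub_sub_sq_norm_sub hP,
    setIntegral_inner_sub_eq_zero_of_mem_qopt hP hcs, mul_zero, sub_zero]

theorem norm_le_of_mem_qopt [NeZero k] (hP : mbounded P M) (hM : 0 ≤ M) (hcs : cs ∈ qopt k P)
    {i : Fin k} (hi : P (disjointed (vcell k cs) i) ≠ 0) : ‖cs i‖ ≤ M := by
  set W := disjointed (vcell k cs) i
  have hbound : ∫ x in W, inner ℝ (cs i) (x - cs i) ∂P
      ≤ ∫ _ in W, (‖cs i‖ * M - ‖cs i‖ ^ 2) ∂P := by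
    refine setIntegral_mono_ae_restrict (integrable_inner_sub hP _ _).integrableOn
      integrableOn_const ?_
    filter_upwards [ae_restrict_of_ae (ae_norm_le_of_mbounded hP)] with x hx
    rw [inner_sub_right, real_inner_self_eq_norm_sq]
    linarith [real_inner_le_norm (cs i) x, mul_le_mul_of_nonneg_left hx (norm_nonneg (cs i))]
  rw [setIntegral_inner_sub_eq_zero_of_mem_qopt hP hcs, setIntegral_const, smul_eq_mul] at hbound
  have hW : 0 < P.real W := ENNReal.toReal_pos hi (measure_ne_top _ _)
  have := (mul_nonneg_iff_of_pos_left hW).1 hbound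
  nlinarith [norm_nonneg (cs i)]

theorem sum_measureReal_mul_sub_le_qrisk_sub [NeZero k] (hP : mbounded P M) (hcs : cs ∈ qopt k P)
    (c : Fin k → H) {T : Set H} (hT : MeasurableSet T) {K : ℝ}
    (hloss : ∀ i, ∀ x ∈ vcell k cs i, ‖x‖ ≤ M →
      ‖x - c i‖ ^ 2 - qgamma k c x ≤ T.indicator (fun _ => K) x) :
    ∑ i, P.real (disjointed (vcell k cs) i) * ‖c i - cs i‖ ^ 2 - K * P.real T
      ≤ qrisk k P c - qrisk k P cs := by
  set g := T.indicator fun _ : H => K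
  have hg : Integrable g P := (integrable_const K).indicator hT
  have hd : Integrable (fun x => qgamma k c x - qgamma k cs x) P :=
    (integrable_qgamma hP c).sub (integrable_qgamma hP cs)
  have hsum := integral_eq_sum_setIntegral_disjointed_vcell
    (f := fun x => qgamma k c x - qgamma k cs x + g x) cs (hd.add hg)
  rw [integral_add hd hg, integral_sub (integrable_qgamma hP c) (integrable_qgamma hP cs),
    integral_indicator_const _ hT, smul_eq_mul] at hsum
  have hcell : ∀ i, P.real (disjointed (vcell k cs) i) * ‖c i - cs i‖ ^ 2
      ≤ ∫ x in disjointed (vcell k cs) i, (qgamma k c x - qgamma k cs x + g x) ∂P := fun i => by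
    rw [← setIntegral_sq_norm_sub_sub_eq_of_mem_qopt hP hcs i (c i)]
    refine setIntegral_mono_ae_restrict
      ((integrable_sq_norm_sub hP _).sub (integrable_sq_norm_sub hP _)).integrableOn
      (hd.add hg).integrableOn ?_
    filter_upwards [ae_restrict_mem (measurableSet_disjointed_vcell cs i),
      ae_restrict_of_ae (ae_norm_le_of_mbounded hP)] with x hxW hxM
    have hx := disjointed_subset _ i hxW
    rw [qgamma_eq_of_mem_vcell hx]
    linarith [hloss i x hx hxM]
  rw [qrisk, qrisk]
  linarith [Finset.sum_le_sum fun i (_ : i ∈ Finset.univ) => hcell i]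

end Optimality

section Margin

variable {E : Type*} [NormedAddCommGroup E] [MeasurableSpace E] {P : Measure E} {M r0 : ℝ}
  {k : ℕ} {cs : Fin k → E}

theorem qpmin_le_measureReal_vcell (hcs : cs ∈ qopt k P) (i : Fin k) :
    qpmin k P ≤ P.real (vcell k cs i) :=
  csInf_le ⟨0, by rintro _ ⟨_, _, _, rfl⟩; exact ENNReal.toReal_nonneg⟩ ⟨cs, hcs, i, rfl⟩

theorem qB_le_norm_sub (hcs : cs ∈ qopt k P) {i j : Fin k} (hij : i ≠ j) :
    qB k P ≤ ‖cs i - cs j‖ :=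
  csInf_le ⟨0, by rintro _ ⟨_, _, _, _, _, rfl⟩; exact norm_nonneg _⟩ ⟨cs, hcs, i, j, hij, rfl⟩

variable [IsFiniteMeasure P]

theorem measureReal_cthickening_nbd_le (hmargin : margin k P M r0) (hcs : cs ∈ qopt k P)
    {t : ℝ} (ht0 : 0 ≤ t) (htr : t ≤ r0) :
    P.real (cthickening t (nbd k cs)) ≤ qB k P * qpmin k P * t / (128 * M ^ 2) := by
  refine le_trans ?_ (hmargin.2.2 t ht0 htr)
  refine le_csSup ⟨P.real Set.univ, ?_⟩ ⟨cs, hcs, rfl⟩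
  rintro _ ⟨_, _, rfl⟩
  exact measureReal_mono (Set.subset_univ _)

theorem measure_nbd_eq_zero (hmargin : margin k P M r0) (hcs : cs ∈ qopt k P) :
    P (nbd k cs) = 0 := by
  have h := measureReal_cthickening_nbd_le hmargin hcs le_rfl hmargin.1.le
  rw [mul_zero, zero_div, cthickening_zero] at h
  exact measure_mono_null subset_closure
    ((measureReal_eq_zero_iff).1 (h.antisymm measureReal_nonneg))

theorem measure_disjointed_vcell (hmargin : margin k P M r0) (hcs : cs ∈ qopt k P) (i : Fin k) :
    P (disjointed (vcell k cs) i) = P (vcell k cs i) :=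
  measure_eq_measure_of_null_sdiff (disjointed_subset _ i)
    (measure_mono_null (diff_disjointed_vcell_subset_nbd cs i) (measure_nbd_eq_zero hmargin hcs))

theorem qpmin_le_measureReal_disjointed_vcell (hmargin : margin k P M r0) (hcs : cs ∈ qopt k P)
    (i : Fin k) : qpmin k P ≤ P.real (disjointed (vcell k cs) i) := by
  rw [measureReal_def, measure_disjointed_vcell hmargin hcs i]
  exact qpmin_le_measureReal_vcell hcs i

end Margin

section LocalStrongConvexity

variable [OpensMeasurableSpace H] {P : Measure H} [IsFiniteMeasure P] {M r0 : ℝ} {k : ℕ}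
  {cs : Fin k → H}

theorem norm_le_of_margin [NeZero k] (hmargin : margin k P M r0) (hM : 0 ≤ M)
    (hcs : cs ∈ qopt k P) (hp : 0 < qpmin k P) (i : Fin k) : ‖cs i‖ ≤ M :=
  norm_le_of_mem_qopt hmargin.2.1 hM hcs fun h => by
    have := qpmin_le_measureReal_disjointed_vcell hmargin hcs i
    rw [measureReal_def, h, ENNReal.toReal_zero] at this
    linarith

theorem mul_sum_sq_norm_sub_le_qrisk_sub [NeZero k] (hmargin : margin k P M r0) (hM : 0 < M)
    (hcs : cs ∈ qopt k P) (hB : 0 < qB k P) (hp : 0 < qpmin k P) {c : Fin k → H}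
    (hc : ∀ i, ‖c i‖ ≤ M) (hdist : 2 * √2 * M * √(∑ i, ‖c i - cs i‖ ^ 2) ≤ qB k P * r0) :
    7 / 8 * qpmin k P * ∑ i, ‖c i - cs i‖ ^ 2 ≤ qrisk k P c - qrisk k P cs := by
  set S := ∑ i, ‖c i - cs i‖ ^ 2
  have hS : 0 ≤ S := by positivity
  set K := 4 * √2 * M * √S
  set t := K / (2 * qB k P)
  have ht : t ≤ r0 := by
    rw [div_le_iff₀ (by positivity)]
    linarith
  have hpair : ∀ i j, i ≠ j → 4 * M * (‖c i - cs i‖ + ‖c j - cs j‖) ≤ K := fun i j hij => by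
    have := add_le_sqrt_two_mul_sqrt_sum_sq (fun l => ‖c l - cs l‖) hij
    have := mul_le_mul_of_nonneg_left this (by positivity : (0 : ℝ) ≤ 4 * M)
    linarith
  have hrisk := sum_measureReal_mul_sub_le_qrisk_sub hmargin.2.1 hcs c
    isClosed_cthickening.measurableSet (K := K) fun i x hx hxM =>
      sq_norm_sub_sub_qgamma_le_indicator hB (fun i j => qB_le_norm_sub hcs) hc
        (norm_le_of_margin hmargin hM.le hcs hp) (by positivity) hpair hx hxM
  have hKT : K * P.real (cthickening t (nbd k cs)) ≤ qpmin k P * S / 8 :=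
    calc K * P.real (cthickening t (nbd k cs))
        ≤ K * (qB k P * qpmin k P * t / (128 * M ^ 2)) := by
          gcongr
          exact measureReal_cthickening_nbd_le hmargin hcs (by positivity) ht
      _ = qpmin k P * S / 8 := by
        simp only [t, K]
        field_simp
        rw [Real.sq_sqrt zero_le_two, Real.sq_sqrt hS]
        ring
  have hcells : qpmin k P * S ≤ ∑ i, P.real (disjointed (vcell k cs) i) * ‖c i - cs i‖ ^ 2 := by
    rw [Finset.mul_sum]
    exact Finset.sum_le_sum fun i _ =>
      mul_le_mul_of_nonneg_right (qpmin_le_measureReal_disjointed_vcell hmargin hcs i)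
        (by positivity)
  linarith

end LocalStrongConvexity

theorem stmt1_general [BorelSpace H]
    (k : ℕ) (hk : 2 ≤ k) (P : Measure H) [IsProbabilityMeasure P]
    (M : ℝ) (hM : 0 < M)
    (r0 : ℝ) (hmargin : margin k P M r0) :
    ∀ cs ∈ qopt k P, ∀ c : Fin k → H, (∀ i, ‖c i‖ ≤ M) →
      Real.sqrt (∑ i, ‖c i - cs i‖ ^ 2) ≤ qB k P * r0 / (4 * Real.sqrt 2 * M) →
      qpmin k P / 2 * (∑ i, ‖c i - cs i‖ ^ 2) ≤ qrisk k P c - qrisk k P cs := by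
  intro cs hcs c hc hdist
  have : NeZero k := ⟨by omega⟩
  set S := ∑ i, ‖c i - cs i‖ ^ 2
  have hS : 0 ≤ S := by positivity
  have hopt : 0 ≤ qrisk k P c - qrisk k P cs := sub_nonneg.2 (hcs c)
  rcases le_or_gt (qpmin k P) 0 with hp | hp
  · exact (mul_nonpos_of_nonpos_of_nonneg (by linarith) hS).trans hopt
  have hdist' : 4 * √2 * M * √S ≤ qB k P * r0 := by
    rw [le_div_iff₀ (by positivity)] at hdist
    linarith
  rcases le_or_gt (qB k P) 0 with hB | hB
  · have hS0 : S = 0 := by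
      have : √S ≤ 0 := le_of_mul_le_mul_left
        (by linarith [mul_nonpos_of_nonpos_of_nonneg hB hmargin.1.le])
        (by positivity : 0 < 4 * √2 * M)
      exact le_antisymm (Real.sqrt_eq_zero'.1 (this.antisymm (Real.sqrt_nonneg S))) hS
    rw [hS0, mul_zero]
    exact hopt
  have hconv := mul_sum_sq_norm_sub_le_qrisk_sub hmargin hM hcs hB hp hc
    (by nlinarith [mul_nonneg hB.le hmargin.1.le])
  nlinarith [mul_nonneg hp.le hS]

/-- Proposition 2.2 (i): local strong convexity of the distortion near optimal
codebooks, under the margin condition. -/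
theorem stmt1 [BorelSpace H] [SecondCountableTopology H] [CompleteSpace H]
    (k : ℕ) (hk : 2 ≤ k) (P : Measure H) [IsProbabilityMeasure P]
    (M : ℝ) (hM : 0 < M) (hsupp : suppGT P k) (hne : (qopt k P).Nonempty)
    (r0 : ℝ) (hmargin : margin k P M r0) :
    ∀ cs ∈ qopt k P, ∀ c : Fin k → H, (∀ i, ‖c i‖ ≤ M) →
      Real.sqrt (∑ i, ‖c i - cs i‖ ^ 2) ≤ qB k P * r0 / (4 * Real.sqrt 2 * M) →
      qpmin k P / 2 * (∑ i, ‖c i - cs i‖ ^ 2) ≤ qrisk k P c - qrisk k P cs :=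
  stmt1_general k hk P M hM r0 hmargin

end
end

section
/- If P is M-bounded, then for every c ∈ B(0,M)^k and every c* ∈ B(0,M)^k, the variance of γ(c,·) − γ(c*,·) under P satisfies Var_P(γ(c,·) − γ(c*,·)) ≤ 16 M² ‖c − c*‖², where ‖c − c*‖² = Σ_{i=1}^k ‖c_i − c_i*‖². -/
open MeasureTheory Metric

noncomputable section

variable {H : Type*} [NormedAddCommGroup H] [InnerProductSpace ℝ H] [MeasurableSpace H]

lemma qgamma_cont (k : ℕ) (hk : 0 < k) (c : Fin k → H) : Continuous (qgamma k c) := by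
  haveI : Nonempty (Fin k) := ⟨⟨0, hk⟩⟩
  have : qgamma k c = fun x => Finset.univ.inf' Finset.univ_nonempty
      (fun j : Fin k => ‖x - c j‖ ^ 2) := by
    funext x
    rw [Finset.inf'_univ_eq_ciInf]
    rfl
  rw [this]
  exact Continuous.finset_inf'_apply _ fun i _ =>
    ((continuous_id.sub continuous_const).norm.pow 2)

lemma qgamma_bddBelow (k : ℕ) (c : Fin k → H) (x : H) :
    BddBelow (Set.range fun j : Fin k => ‖x - c j‖ ^ 2) :=
  ⟨0, by rintro _ ⟨j, rfl⟩; positivity⟩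

lemma qgamma_diff_le (k : ℕ) (hk : 0 < k) (c cs : Fin k → H) (x : H) (M : ℝ)
    (hx : ‖x‖ ≤ M) (hc : ∀ i, ‖c i‖ ≤ M) (hcs : ∀ i, ‖cs i‖ ≤ M) (D : ℝ)
    (hD : ∀ j, ‖c j - cs j‖ ≤ D) :
    qgamma k c x - qgamma k cs x ≤ 4 * M * D := by
  haveI : Nonempty (Fin k) := ⟨⟨0, hk⟩⟩
  have key : ∀ j, ‖x - c j‖ ^ 2 ≤ ‖x - cs j‖ ^ 2 + 4 * M * D := by
    intro j
    have h1 : ‖x - c j‖ ≤ ‖x - cs j‖ + ‖cs j - c j‖ := norm_sub_le_norm_sub_add_norm_sub _ _ _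
    have h2 : ‖x - c j‖ ^ 2 - ‖x - cs j‖ ^ 2
        = (‖x - c j‖ + ‖x - cs j‖) * (‖x - c j‖ - ‖x - cs j‖) := by ring
    have h3 : ‖x - c j‖ - ‖x - cs j‖ ≤ ‖c j - cs j‖ := by
      rw [norm_sub_rev (cs j)] at h1; linarith
    have h4 : ‖x - c j‖ + ‖x - cs j‖ ≤ 4 * M := by
      have := norm_sub_le x (c j)
      have := norm_sub_le x (cs j)
      have := hc j; have := hcs j
      linarith
    have hM : (0:ℝ) ≤ M := le_trans (norm_nonneg x) hx
    nlinarith [norm_nonneg (x - c j), norm_nonneg (x - cs j), norm_nonneg (c j - cs j), hD j]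
  have : qgamma k c x ≤ qgamma k cs x + 4 * M * D := by
    have : qgamma k cs x + 4 * M * D = ⨅ j : Fin k, (‖x - cs j‖ ^ 2 + 4 * M * D) := by
      rw [qgamma, ← ciInf_add (qgamma_bddBelow k cs x)]
    rw [this, qgamma]
    exact ciInf_mono (qgamma_bddBelow k c x) key |>.trans (le_of_eq rfl) |>.trans
      (le_of_eq rfl)
  linarith

/-- The variance bound: for `M`-bounded `P` and codebooks `c, c*` in `B(0,M)^k`,
`Var(γ(c,·) − γ(c*,·)) ≤ 16 M² ‖c − c*‖²`. -/
theorem stmt4 [BorelSpace H] [SecondCountableTopology H] [CompleteSpace H]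
    (k : ℕ) (hk : 2 ≤ k) (P : Measure H) [IsProbabilityMeasure P]
    (M : ℝ) (hM : 0 < M) (hbd : mbounded P M)
    (c cs : Fin k → H) (hc : ∀ i, ‖c i‖ ≤ M) (hcs : ∀ i, ‖cs i‖ ≤ M) :
    ProbabilityTheory.variance (fun x => qgamma k c x - qgamma k cs x) P ≤
      16 * M ^ 2 * ∑ i, ‖c i - cs i‖ ^ 2 := by
  have hk0 : 0 < k := by omega
  set f : H → ℝ := fun x => qgamma k c x - qgamma k cs x with hf
  have hcont : Continuous f := (qgamma_cont k hk0 c).sub (qgamma_cont k hk0 cs)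
  set S : ℝ := ∑ i, ‖c i - cs i‖ ^ 2 with hS
  have hSnn : 0 ≤ S := Finset.sum_nonneg fun i _ => by positivity
  set D : ℝ := Real.sqrt S with hDdef
  have hD : ∀ j, ‖c j - cs j‖ ≤ D := by
    intro j
    rw [hDdef, show ‖c j - cs j‖ = Real.sqrt (‖c j - cs j‖ ^ 2) by
      rw [Real.sqrt_sq (norm_nonneg _)]]
    refine Real.sqrt_le_sqrt ?_
    rw [hS]
    exact Finset.single_le_sum (f := fun i => ‖c i - cs i‖ ^ 2)
      (fun i _ => by positivity) (Finset.mem_univ j)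
  have hbound : ∀ x : H, ‖x‖ ≤ M → (f x) ^ 2 ≤ 16 * M ^ 2 * S := by
    intro x hx
    have h1 := qgamma_diff_le k hk0 c cs x M hx hc hcs D hD
    have h2 := qgamma_diff_le k hk0 cs c x M hx hcs hc D (fun j => by
      rw [norm_sub_rev]; exact hD j)
    have habs : |f x| ≤ 4 * M * D := abs_le.2 ⟨by simp only [hf]; linarith, h1⟩
    have hMD : (0:ℝ) ≤ 4 * M * D := by positivity
    have := sq_le_sq' (neg_le_of_abs_le habs) (le_of_abs_le habs)
    calc (f x) ^ 2 ≤ (4 * M * D) ^ 2 := this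
      _ = 16 * M ^ 2 * S := by
          rw [mul_pow, mul_pow, hDdef, Real.sq_sqrt hSnn]; ring
  have hae : ∀ᵐ x ∂P, (f x) ^ 2 ≤ 16 * M ^ 2 * S := by
    have : ∀ᵐ x ∂P, x ∈ closedBall (0:H) M := by
      rw [ae_iff]
      have : {x : H | ¬ x ∈ closedBall (0:H) M} = (closedBall (0:H) M)ᶜ := rfl
      rw [this]; exact hbd
    filter_upwards [this] with x hx
    exact hbound x (by simpa [mem_closedBall, dist_zero_right] using hx)
  calc ProbabilityTheory.variance f P ≤ ∫ x, (f ^ 2) x ∂P :=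
        ProbabilityTheory.variance_le_expectation_sq hcont.aestronglyMeasurable
    _ ≤ ∫ _x : H, 16 * M ^ 2 * S ∂P := by
        refine integral_mono_of_nonneg ?_ (integrable_const _) ?_
        · filter_upwards with x
          simp only [Pi.pow_apply]
          positivity
        · filter_upwards [hae] with x hx using hx
    _ = 16 * M ^ 2 * S := by simp


end
end
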